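/- (Hölder inequality for slice spaces.) Let n ≥ 1, t ∈ (0,∞), q ∈ [1,∞], r ∈ (1,∞), and let q', r' be the conjugate exponents, 1/q + 1/q' = 1/r + 1/r' = 1. Then for all measurable functions f, g : ℝⁿ → ℂ, ∫_{ℝⁿ} |f(x)g(x)| dx ≤ ‖f‖_{(E_r^q)_t} · ‖g‖_{(E_{r'}^{q'})_t}. -/

import Mathlib

open MeasureTheory Metric Set ENNReal
open scoped NNReal

noncomputable section

abbrev En (n : ℕ) : Type := EuclideanSpace ℝ (Fin n)

/-- Slice norm `‖f‖_{(E_r^q)_t}` for `ℝ≥0∞`-valued functions. -/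
def sliceNorm (n : ℕ) (t r : ℝ) (q : ℝ≥0∞) (g : En n → ℝ≥0∞) : ℝ≥0∞ :=
  if q = ∞ then
    essSup (fun x => ((volume (ball x t))⁻¹ * ∫⁻ y in ball x t, g y ^ r) ^ (1 / r)) volume
  else
    (∫⁻ x, (((volume (ball x t))⁻¹ * ∫⁻ y in ball x t, g y ^ r) ^ (1 / r)) ^ q.toReal) ^ (1 / q.toReal)

/-- Slice norm of a complex-valued function. -/
def sliceNormC (n : ℕ) (t r : ℝ) (q : ℝ≥0∞) (f : En n → ℂ) : ℝ≥0∞ :=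
  sliceNorm n t r q fun y => (‖f y‖₊ : ℝ≥0∞)

/-- The ball `B_k = {x : |x| ≤ 2^k}`. -/
def ballZ (n : ℕ) (k : ℤ) : Set (En n) := closedBall 0 ((2 : ℝ) ^ k)

/-- The shell `S_k = B_k \ B_{k-1}`. -/
def shell (n : ℕ) (k : ℤ) : Set (En n) := ballZ n k \ ballZ n (k - 1)

/-- Homogeneous Herz-slice norm of an `ℝ≥0∞`-valued function. -/
def herzHom (n : ℕ) (t r : ℝ) (q : ℝ≥0∞) (α : ℝ) (p : ℝ≥0∞) (g : En n → ℝ≥0∞) : ℝ≥0∞ :=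
  if p = ∞ then
    ⨆ k : ℤ, (2 : ℝ≥0∞) ^ ((k : ℝ) * α) * sliceNorm n t r q ((shell n k).indicator g)
  else
    (∑' k : ℤ, ((2 : ℝ≥0∞) ^ ((k : ℝ) * α) * sliceNorm n t r q ((shell n k).indicator g)) ^ p.toReal) ^ (1 / p.toReal)

/-- Homogeneous Herz-slice norm of a complex-valued function. -/
def herzHomC (n : ℕ) (t r : ℝ) (q : ℝ≥0∞) (α : ℝ) (p : ℝ≥0∞) (f : En n → ℂ) : ℝ≥0∞ :=
  herzHom n t r q α p fun y => (‖f y‖₊ : ℝ≥0∞)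

/-- The `k`-th piece in the non-homogeneous decomposition: `B_0` for `k = 0`, `S_k` for `k ≥ 1`. -/
def pieceN (n : ℕ) (k : ℕ) : Set (En n) := if k = 0 then ballZ n 0 else shell n k

/-- Non-homogeneous Herz-slice norm of an `ℝ≥0∞`-valued function. -/
def herzNonHom (n : ℕ) (t r : ℝ) (q : ℝ≥0∞) (α : ℝ) (p : ℝ≥0∞) (g : En n → ℝ≥0∞) : ℝ≥0∞ :=
  if p = ∞ then
    ⨆ k : ℕ, (2 : ℝ≥0∞) ^ ((k : ℝ) * α) * sliceNorm n t r q ((pieceN n k).indicator g)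
  else
    (∑' k : ℕ, ((2 : ℝ≥0∞) ^ ((k : ℝ) * α) * sliceNorm n t r q ((pieceN n k).indicator g)) ^ p.toReal) ^ (1 / p.toReal)

/-- Non-homogeneous Herz-slice norm of a complex-valued function. -/
def herzNonHomC (n : ℕ) (t r : ℝ) (q : ℝ≥0∞) (α : ℝ) (p : ℝ≥0∞) (f : En n → ℂ) : ℝ≥0∞ :=
  herzNonHom n t r q α p fun y => (‖f y‖₊ : ℝ≥0∞)

/-- Hardy–Littlewood maximal operator. -/
def maximal (n : ℕ) (f : En n → ℂ) (x : En n) : ℝ≥0∞ :=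
  ⨆ (ρ : ℝ) (_ : 0 < ρ), (volume (ball x ρ))⁻¹ * ∫⁻ y in ball x ρ, (‖f y‖₊ : ℝ≥0∞)

/-!
By Fubini and the translation invariance of Lebesgue measure, averaging over balls of radius `t`
preserves integrals: `∫ |fg| = ∫ ⨍_{B(x,t)} |fg| dx`. Hölder's inequality for the normalized measure
on `B(x,t)` bounds the inner average by the product of the local `L^r` and `L^{r'}` averages of `f`
and `g`. The slice norm is the `L^q` norm of the local `L^r` average, so Hölder's inequality in `x`
with exponents `q, q'` (including `q = ∞`) concludes.
-/

section BallAverage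

variable {E : Type*} [PseudoMetricSpace E] [MeasurableSpace E] (μ : Measure E)

def ballAverage (x : E) (t : ℝ) : Measure E := (μ (ball x t))⁻¹ • μ.restrict (ball x t)

lemma lintegral_ballAverage (x : E) (t : ℝ) (h : E → ℝ≥0∞) :
    ∫⁻ y, h y ∂ballAverage μ x t
      = (μ (ball x t))⁻¹ * ∫⁻ y in ball x t, h y ∂μ := by
  rw [ballAverage, lintegral_smul_measure, smul_eq_mul]

lemma eLpNorm_ballAverage {r : ℝ} (hr : 0 < r) (x : E) (t : ℝ) (h : E → ℝ≥0∞) :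
    eLpNorm h (ENNReal.ofReal r) (ballAverage μ x t)
      = ((μ (ball x t))⁻¹ * ∫⁻ y in ball x t, h y ^ r ∂μ) ^ (1 / r) := by
  rw [eLpNorm_eq_lintegral_rpow_enorm_toReal (by simpa using hr) ofReal_ne_top,
    ENNReal.toReal_ofReal hr.le, lintegral_ballAverage]
  simp only [enorm_eq_self]

lemma measurableSet_dist_lt [OpensMeasurableSpace (E × E)] (t : ℝ) :
    MeasurableSet {p : E × E | dist p.2 p.1 < t} :=
  (isOpen_lt (continuous_snd.dist continuous_fst) continuous_const).measurableSet

lemma measurable_lintegral_ball [SecondCountableTopology E] [OpensMeasurableSpace E] [SFinite μ]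
    (t : ℝ) {h : E → ℝ≥0∞} (hh : Measurable h) :
    Measurable fun x => ∫⁻ y in ball x t, h y ∂μ := by
  simp_rw [← lintegral_indicator measurableSet_ball]
  exact ((hh.comp measurable_snd).indicator (measurableSet_dist_lt t)).lintegral_prod_right'

end BallAverage

section AddHaar

variable {E : Type*} [NormedAddCommGroup E] [ProperSpace E] [MeasurableSpace E] [BorelSpace E]
  (μ : Measure E) [μ.IsAddHaarMeasure]

lemma lintegral_lintegral_ballAverage {t : ℝ} (ht : 0 < t) {h : E → ℝ≥0∞}
    (hh : Measurable h) :
    ∫⁻ x, ∫⁻ y, h y ∂ballAverage μ x t ∂μ = ∫⁻ y, h y ∂μ := by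
  have hc : ∀ x : E, μ (ball x t) = μ (ball 0 t) := fun x => Measure.addHaar_ball_center μ x t
  have hc₀ : μ (ball (0 : E) t) ≠ 0 := (measure_ball_pos μ 0 ht).ne'
  have hc_top : μ (ball (0 : E) t) ≠ ∞ := measure_ball_lt_top.ne
  have hsymm : ∀ x y : E, (ball x t).indicator h y = (ball y t).indicator (fun _ => h y) x := by
    intro x y
    classical
    rw [Set.indicator_apply, Set.indicator_apply, mem_ball_comm]
  calc ∫⁻ x, ∫⁻ y, h y ∂ballAverage μ x t ∂μ
      = ∫⁻ x, (μ (ball 0 t))⁻¹ * ∫⁻ y, (ball x t).indicator h y ∂μ ∂μ := by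
        simp_rw [lintegral_ballAverage, hc, lintegral_indicator measurableSet_ball]
    _ = (μ (ball 0 t))⁻¹
          * ∫⁻ y, ∫⁻ x, (ball y t).indicator (fun _ => h y) x ∂μ ∂μ := by
        rw [lintegral_const_mul' _ _ (ENNReal.inv_ne_top.mpr hc₀), lintegral_lintegral_swap]
        · simp_rw [hsymm]
        · exact ((hh.comp measurable_snd).indicator (measurableSet_dist_lt t)).aemeasurable
    _ = (μ (ball 0 t))⁻¹ * ∫⁻ y, μ (ball 0 t) * h y ∂μ := by
        simp_rw [lintegral_indicator_const measurableSet_ball, hc, mul_comm]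
    _ = ∫⁻ y, h y ∂μ := by
        rw [lintegral_const_mul _ hh, ← mul_assoc, ENNReal.inv_mul_cancel hc₀ hc_top, one_mul]

lemma measurable_eLpNorm_ballAverage {r : ℝ} (hr : 0 < r) (t : ℝ) {h : E → ℝ≥0∞}
    (hh : Measurable h) :
    Measurable fun x => eLpNorm h (ENNReal.ofReal r) (ballAverage μ x t) := by
  have hc : ∀ x : E, μ (ball x t) = μ (ball 0 t) := fun x => Measure.addHaar_ball_center μ x t
  simp_rw [eLpNorm_ballAverage μ hr, hc]
  exact (measurable_const.mul (measurable_lintegral_ball μ t (hh.pow_const r))).pow_const _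

end AddHaar

section Holder

variable {α : Type*} [MeasurableSpace α] {μ : Measure α} {f g : α → ℝ≥0∞}

lemma lintegral_mul_le_essSup_mul_lintegral (hg : AEMeasurable g μ) :
    ∫⁻ x, f x * g x ∂μ ≤ essSup f μ * ∫⁻ x, g x ∂μ :=
  (lintegral_mono_ae ((ae_le_essSup f).mono fun x hx => mul_le_mul_left hx (g x))).trans_eq
    (lintegral_const_mul'' _ hg)

lemma lintegral_mul_le_eLpNorm_mul_eLpNorm {p q : ℝ≥0∞} [p.HolderConjugate q]
    (hf : AEMeasurable f μ) (hg : AEMeasurable g μ) :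
    ∫⁻ x, f x * g x ∂μ ≤ eLpNorm f p μ * eLpNorm g q μ := by
  obtain rfl | hp := eq_or_ne p ∞
  · obtain rfl : q = 1 := (HolderConjugate.eq_top_iff_eq_one ∞ q).mp rfl
    simpa only [eLpNorm_exponent_top, eLpNormEssSup_eq_essSup_enorm, eLpNorm_one_eq_lintegral_enorm,
      enorm_eq_self] using lintegral_mul_le_essSup_mul_lintegral hg
  obtain rfl | hq := eq_or_ne q ∞
  · obtain rfl : p = 1 := (HolderConjugate.eq_top_iff_eq_one ∞ p).mp rfl
    simp_rw [mul_comm (f _), mul_comm (eLpNorm f 1 μ)]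
    simpa only [eLpNorm_exponent_top, eLpNormEssSup_eq_essSup_enorm, eLpNorm_one_eq_lintegral_enorm,
      enorm_eq_self] using lintegral_mul_le_essSup_mul_lintegral hf
  rw [eLpNorm_eq_lintegral_rpow_enorm_toReal (HolderConjugate.ne_zero p q) hp,
    eLpNorm_eq_lintegral_rpow_enorm_toReal (HolderConjugate.ne_zero q p) hq]
  simpa only [enorm_eq_self, Pi.mul_apply] using
    ENNReal.lintegral_mul_le_Lp_mul_Lq μ (HolderConjugate.toReal_of_ne_top hp hq) hf hg

end Holder

lemma sliceNorm_eq_eLpNorm {n : ℕ} {t r : ℝ} {q : ℝ≥0∞} (hr : 0 < r) (hq : q ≠ 0)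
    (g : En n → ℝ≥0∞) :
    sliceNorm n t r q g
      = eLpNorm (fun x => eLpNorm g (ENNReal.ofReal r) (ballAverage volume x t)) q volume := by
  simp_rw [eLpNorm_ballAverage volume hr, sliceNorm]
  split_ifs with hq_top
  · rw [hq_top, eLpNorm_exponent_top, eLpNormEssSup_eq_essSup_enorm]
    simp only [enorm_eq_self]
  · rw [eLpNorm_eq_lintegral_rpow_enorm_toReal hq hq_top]
    simp only [enorm_eq_self]

theorem slice_holder_general
    (n : ℕ) (t r r' : ℝ) (ht : 0 < t) (hr : 1 < r)
    (hrr' : 1 / r + 1 / r' = 1)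
    (q q' : ℝ≥0∞) (hqq' : 1 / q + 1 / q' = 1)
    (f g : En n → ℂ) (hf : Measurable f) (hg : Measurable g) :
    ∫⁻ x, (‖f x‖₊ : ℝ≥0∞) * (‖g x‖₊ : ℝ≥0∞)
      ≤ sliceNormC n t r q f * sliceNormC n t r' q' g := by
  set F : En n → ℝ≥0∞ := fun y => ‖f y‖₊
  set G : En n → ℝ≥0∞ := fun y => ‖g y‖₊
  have hF : Measurable F := hf.nnnorm.coe_nnreal_ennreal
  have hG : Measurable G := hg.nnnorm.coe_nnreal_ennreal
  have hrr : r.HolderConjugate r' :=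
    Real.holderConjugate_iff.mpr ⟨hr, by simpa [one_div] using hrr'⟩
  have hrr_ennreal : (ENNReal.ofReal r).HolderConjugate (ENNReal.ofReal r') := hrr.ennrealOfReal
  have hqq : q.HolderConjugate q' := ENNReal.holderConjugate_iff.mpr (by simpa [one_div] using hqq')
  let ν (x : En n) := ballAverage volume x t
  calc ∫⁻ x, F x * G x
      = ∫⁻ x, ∫⁻ y, F y * G y ∂ν x :=
        (lintegral_lintegral_ballAverage volume ht (hF.mul hG)).symm
    _ ≤ ∫⁻ x, eLpNorm F (.ofReal r) (ν x) * eLpNorm G (.ofReal r') (ν x) :=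
        lintegral_mono fun x => lintegral_mul_le_eLpNorm_mul_eLpNorm hF.aemeasurable hG.aemeasurable
    _ ≤ eLpNorm (fun x => eLpNorm F (.ofReal r) (ν x)) q volume
          * eLpNorm (fun x => eLpNorm G (.ofReal r') (ν x)) q' volume :=
        lintegral_mul_le_eLpNorm_mul_eLpNorm
          (measurable_eLpNorm_ballAverage volume hrr.pos t hF).aemeasurable
          (measurable_eLpNorm_ballAverage volume hrr.symm.pos t hG).aemeasurable
    _ = sliceNormC n t r q f * sliceNormC n t r' q' g := by
        rw [sliceNormC, sliceNormC, sliceNorm_eq_eLpNorm hrr.pos (HolderConjugate.ne_zero q q'),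
          sliceNorm_eq_eLpNorm hrr.symm.pos (HolderConjugate.ne_zero q' q)]

/-- Hölder's inequality for slice spaces. -/
theorem slice_holder
    (n : ℕ) (hn : 1 ≤ n) (t r r' : ℝ) (ht : 0 < t) (hr : 1 < r)
    (hrr' : 1 / r + 1 / r' = 1)
    (q q' : ℝ≥0∞) (hq : 1 ≤ q) (hqq' : 1 / q + 1 / q' = 1)
    (f g : En n → ℂ) (hf : Measurable f) (hg : Measurable g) :
    ∫⁻ x, (‖f x‖₊ : ℝ≥0∞) * (‖g x‖₊ : ℝ≥0∞)
      ≤ sliceNormC n t r q f * sliceNormC n t r' q' g :=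
  slice_holder_general n t r r' ht hr hrr' q q' hqq' f g hf hg
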